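/- Lipschitz bound for the regularized (frequency-truncated) back-projection (error term Δ_{τ,2} of Theorem 1): Let p ≥ 1 and C₀ > 0. Let λ₁, λ₂ : S^{p−1} × ℝ → ℝ be measurable, square-integrable with respect to the product of the surface measure σ on S^{p−1} and Lebesgue measure on ℝ, with λ_i(θ, u) = 0 whenever |u| > C₀. For i = 1, 2 define λ̂_i(θ, r) = ∫_ℝ λ_i(θ, u) e^{−iur} du and the truncated back-projection Ř_τ(λ_i)(z) = (1 / (2(2π)^p)) ∫_{S^{p−1}} ∫_{|r| ≤ τ} λ̂_i(θ, r) e^{i r ⟨θ, z⟩} |r|^{p−1} dr dσ(θ). Then for every τ > 0 and every z ∈ ℝ^p, |Ř_τ(λ₁)(z) − Ř_τ(λ₂)(z)| ≤ ((2C₀ σ(S^{p−1}))^{1/2} / (2π)^p) · τ^p · ( ∫_{S^{p−1}} ∫_ℝ (λ₁(θ, u) − λ₂(θ, u))² du dσ(θ) )^{1/2}. -/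

import Mathlib

open MeasureTheory
open scoped RealInnerProductSpace

/-- The surface measure on the unit sphere `S^{p-1} ⊂ ℝ^p`. -/
noncomputable def sphereMeasure (p : ℕ) :
    Measure (Metric.sphere (0 : EuclideanSpace ℝ (Fin p)) 1) :=
  (volume : Measure (EuclideanSpace ℝ (Fin p))).toSphere

/-- The one-dimensional Fourier transform of the slice `λ(θ, ·)` at frequency `r`:
`λ̂(θ, r) = ∫ λ(θ, u) e^{-iur} du`. -/
noncomputable def ftSlice (p : ℕ)
    (lam : Metric.sphere (0 : EuclideanSpace ℝ (Fin p)) 1 → ℝ → ℝ)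
    (θ : Metric.sphere (0 : EuclideanSpace ℝ (Fin p)) 1) (r : ℝ) : ℂ :=
  ∫ u : ℝ, (lam θ u : ℂ) * Complex.exp (-(Complex.I * (u : ℂ) * (r : ℂ)))

/-- The frequency-truncated (regularized) filtered back-projection at cut-off level `τ`. -/
noncomputable def truncBackProj (p : ℕ)
    (lam : Metric.sphere (0 : EuclideanSpace ℝ (Fin p)) 1 → ℝ → ℝ)
    (τ : ℝ) (z : EuclideanSpace ℝ (Fin p)) : ℂ :=
  (1 / (2 * (2 * Real.pi) ^ p) : ℂ) *
    ∫ θ : Metric.sphere (0 : EuclideanSpace ℝ (Fin p)) 1,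
      (∫ r in {r : ℝ | |r| ≤ τ},
        ftSlice p lam θ r *
          Complex.exp (Complex.I * (r : ℂ) *
            ((⟪(θ : EuclideanSpace ℝ (Fin p)), z⟫ : ℝ) : ℂ)) *
          ((|r| ^ (p - 1) : ℝ) : ℂ))
      ∂(sphereMeasure p)

/-!
By linearity `Ř_τ(λ₁) − Ř_τ(λ₂) = Ř_τ(λ₁ − λ₂)`, so it suffices to bound `Ř_τ(λ)`. Since `λ(θ, ·)`
vanishes off `[−C₀, C₀]`, Cauchy–Schwarz gives `|λ̂(θ, r)| ≤ ‖λ(θ, ·)‖₁ ≤ √(2C₀) ‖λ(θ, ·)‖₂`, so the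
`r`-integral over `[−τ, τ]` is at most `2τ^p √(2C₀) ‖λ(θ, ·)‖₂`. A second Cauchy–Schwarz over the
sphere bounds `∫ ‖λ(θ, ·)‖₂ dσ` by `√σ(S^{p−1}) · d₂(λ, 0)`.
-/
theorem integral_le_sqrt_measureReal_univ_mul_sqrt_integral_sq {α : Type*} [MeasurableSpace α]
    {μ : Measure α} [IsFiniteMeasure μ] {f : α → ℝ} (hf : MemLp f 2 μ) (hf₀ : 0 ≤ᵐ[μ] f) :
    ∫ x, f x ∂μ ≤ √(μ.real Set.univ) * √(∫ x, f x ^ 2 ∂μ) := by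
  have h := integral_mul_le_Lp_mul_Lq_of_nonneg Real.HolderConjugate.two_two
    (Filter.Eventually.of_forall fun _ => zero_le_one) hf₀
    (by simpa using memLp_const (1 : ℝ)) (by simpa using hf)
  rw [Real.sqrt_eq_rpow, Real.sqrt_eq_rpow]
  simpa [measureReal_def] using h

section BoundedSupport

variable {f : ℝ → ℝ} {C : ℝ}

theorem integrable_of_memLp_two_of_eq_zero_of_lt_abs (hf : MemLp f 2 volume)
    (hsupp : ∀ u, C < |u| → f u = 0) : Integrable f volume := by
  exact IntegrableOn.integrable_of_forall_notMem_eq_zero (s := Set.Icc (-C) C)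
    ((hf.restrict _).integrable one_le_two) fun u hu => hsupp u (not_le.1 (mt abs_le.1 hu))

theorem integral_abs_le_sqrt_mul_sqrt_integral_sq_of_eq_zero_of_lt_abs (hf : MemLp f 2 volume)
    (hsupp : ∀ u, C < |u| → f u = 0) :
    ∫ u, |f u| ≤ √(2 * C) * √(∫ u, f u ^ 2) := by
  have hvol : √((volume.restrict (Set.Icc (-C) C)).real Set.univ) = √(2 * C) := by
    rw [measureReal_restrict_apply_univ, Real.volume_real_Icc, sub_neg_eq_add, ← two_mul]
    grind [Real.sqrt_eq_zero']
  calc ∫ u, |f u| = ∫ u in Set.Icc (-C) C, |f u| :=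
        (setIntegral_eq_integral_of_forall_compl_eq_zero fun u hu => by
          rw [hsupp u (not_le.1 (mt abs_le.1 hu)), abs_zero]).symm
    _ ≤ √(2 * C) * √(∫ u in Set.Icc (-C) C, |f u| ^ 2) := by
        rw [← hvol]
        exact integral_le_sqrt_measureReal_univ_mul_sqrt_integral_sq (hf.abs.restrict _)
          (Filter.Eventually.of_forall fun u => abs_nonneg _)
    _ ≤ √(2 * C) * √(∫ u, f u ^ 2) := by
        simp only [sq_abs]
        gcongr
        · exact Filter.Eventually.of_forall fun u => sq_nonneg _
        · exact hf.integrable_sq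
        · exact Measure.restrict_le_self

end BoundedSupport

theorem ae_memLp_two_prodMk {α β : Type*} [MeasurableSpace α] [MeasurableSpace β]
    {μ : Measure α} {ν : Measure β} [SFinite μ] [SFinite ν] {f : α × β → ℝ}
    (hf : MemLp f 2 (μ.prod ν)) : ∀ᵐ x ∂μ, MemLp (fun y => f (x, y)) 2 ν := by
  filter_upwards [hf.1.prodMk_left, hf.integrable_sq.prod_right_ae] with x hmeas hsq
  exact (memLp_two_iff_integrable_sq hmeas).2 hsq

theorem memLp_two_sqrt_integral_sq {α β : Type*} [MeasurableSpace α] [MeasurableSpace β]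
    {μ : Measure α} {ν : Measure β} [SFinite μ] [SFinite ν] {f : α × β → ℝ}
    (hf : MemLp f 2 (μ.prod ν)) : MemLp (fun x => √(∫ y, f (x, y) ^ 2 ∂ν)) 2 μ := by
  have hint : Integrable (fun x => ∫ y, f (x, y) ^ 2 ∂ν) μ := hf.integrable_sq.integral_prod_left
  refine (memLp_two_iff_integrable_sq
    (Real.continuous_sqrt.comp_aestronglyMeasurable hint.1)).2 ?_
  refine hint.congr (Filter.Eventually.of_forall fun x => ?_)
  exact (Real.sq_sqrt (integral_nonneg fun y => sq_nonneg _)).symm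

local notation "𝕊" p:max => Metric.sphere (0 : EuclideanSpace ℝ (Fin p)) 1

instance (p : ℕ) : IsFiniteMeasure (sphereMeasure p) := by
  unfold sphereMeasure; infer_instance

section FourierSlice

variable {p : ℕ} {lam lam₁ lam₂ : 𝕊 p → ℝ → ℝ} {θ : 𝕊 p}

theorem norm_ftSlice_integrand (lam : ℝ → ℝ) (r u : ℝ) :
    ‖(lam u : ℂ) * Complex.exp (-(Complex.I * u * r))‖ = |lam u| := by
  simp [Complex.norm_exp]

theorem norm_ftSlice_le (r : ℝ) : ‖ftSlice p lam θ r‖ ≤ ∫ u, |lam θ u| :=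
  (norm_integral_le_integral_norm _).trans_eq
    (integral_congr_ae (Filter.Eventually.of_forall fun u => norm_ftSlice_integrand _ r u))

theorem integrable_ftSlice_integrand {f : ℝ → ℝ} (hf : Integrable f volume) (r : ℝ) :
    Integrable (fun u : ℝ => (f u : ℂ) * Complex.exp (-(Complex.I * u * r))) volume := by
  refine hf.ofReal.mul_bdd (c := 1) (Continuous.aestronglyMeasurable (by fun_prop))
    (Filter.Eventually.of_forall fun u => ?_)
  simp [Complex.norm_exp]

theorem ftSlice_sub (h₁ : Integrable (lam₁ θ) volume) (h₂ : Integrable (lam₂ θ) volume) (r : ℝ) :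
    ftSlice p (lam₁ - lam₂) θ r = ftSlice p lam₁ θ r - ftSlice p lam₂ θ r := by
  rw [ftSlice, ftSlice, ftSlice, ← integral_sub (integrable_ftSlice_integrand h₁ r)
    (integrable_ftSlice_integrand h₂ r)]
  congr 1 with u
  simp only [Pi.sub_apply]
  push_cast
  ring

theorem stronglyMeasurable_ftSlice (hmeas : Measurable fun q : 𝕊 p × ℝ => lam q.1 q.2) :
    StronglyMeasurable fun q : 𝕊 p × ℝ => ftSlice p lam q.1 q.2 := by
  have hlam : Measurable fun q : (𝕊 p × ℝ) × ℝ => lam q.1.1 q.2 :=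
    hmeas.comp (measurable_fst.fst.prodMk measurable_snd)
  exact (by fun_prop : Measurable fun q : (𝕊 p × ℝ) × ℝ =>
    (lam q.1.1 q.2 : ℂ) * Complex.exp (-(Complex.I * q.2 * q.1.2))).stronglyMeasurable
    |>.integral_prod_right'

end FourierSlice

noncomputable def backProjIntegrand (p : ℕ) (lam : 𝕊 p → ℝ → ℝ) (z : EuclideanSpace ℝ (Fin p))
    (θ : 𝕊 p) (r : ℝ) : ℂ :=
  ftSlice p lam θ r *
    Complex.exp (Complex.I * r * ((⟪(θ : EuclideanSpace ℝ (Fin p)), z⟫ : ℝ) : ℂ)) *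
    ((|r| ^ (p - 1) : ℝ) : ℂ)

theorem truncBackProj_eq (p : ℕ) (lam : 𝕊 p → ℝ → ℝ) (τ : ℝ) (z : EuclideanSpace ℝ (Fin p)) :
    truncBackProj p lam τ z = (1 / (2 * (2 * Real.pi) ^ p) : ℂ) *
      ∫ θ, (∫ r in Set.Icc (-τ) τ, backProjIntegrand p lam z θ r) ∂(sphereMeasure p) := by
  rw [truncBackProj, show {r : ℝ | |r| ≤ τ} = Set.Icc (-τ) τ by ext r; simp [abs_le]]
  rfl

section BackProjIntegrand

variable {p : ℕ} {lam lam₁ lam₂ : 𝕊 p → ℝ → ℝ} {z : EuclideanSpace ℝ (Fin p)} {θ : 𝕊 p}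
  {τ : ℝ}

theorem norm_backProjIntegrand (r : ℝ) :
    ‖backProjIntegrand p lam z θ r‖ = ‖ftSlice p lam θ r‖ * |r| ^ (p - 1) := by
  simp [backProjIntegrand, Complex.norm_exp]

theorem norm_backProjIntegrand_le {r : ℝ} (hr : r ∈ Set.Icc (-τ) τ) :
    ‖backProjIntegrand p lam z θ r‖ ≤ (∫ u, |lam θ u|) * τ ^ (p - 1) := by
  rw [norm_backProjIntegrand]
  exact mul_le_mul (norm_ftSlice_le r) (pow_le_pow_left₀ (abs_nonneg r) (abs_le.2 hr) _)
    (by positivity) (integral_nonneg fun u => abs_nonneg _)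

theorem backProjIntegrand_sub (h₁ : Integrable (lam₁ θ) volume) (h₂ : Integrable (lam₂ θ) volume)
    (r : ℝ) : backProjIntegrand p (lam₁ - lam₂) z θ r =
      backProjIntegrand p lam₁ z θ r - backProjIntegrand p lam₂ z θ r := by
  simp only [backProjIntegrand, ftSlice_sub h₁ h₂]
  ring

theorem norm_setIntegral_backProjIntegrand_le (hp : 1 ≤ p) (hτ : 0 ≤ τ) :
    ‖∫ r in Set.Icc (-τ) τ, backProjIntegrand p lam z θ r‖ ≤ 2 * τ ^ p * ∫ u, |lam θ u| := by
  refine (norm_setIntegral_le_of_norm_le_const measure_Icc_lt_top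
    fun r hr => norm_backProjIntegrand_le hr).trans_eq ?_
  rw [Real.volume_real_Icc_of_le (by linarith), ← Nat.sub_add_cancel hp, pow_succ,
    Nat.add_sub_cancel]
  ring

theorem stronglyMeasurable_backProjIntegrand
    (hmeas : Measurable fun q : 𝕊 p × ℝ => lam q.1 q.2) :
    StronglyMeasurable fun q : 𝕊 p × ℝ => backProjIntegrand p lam z q.1 q.2 := by
  refine ((stronglyMeasurable_ftSlice hmeas).mul ?_).mul ?_ <;>
    exact Continuous.stronglyMeasurable (by fun_prop)

theorem integrableOn_backProjIntegrand (hmeas : Measurable fun q : 𝕊 p × ℝ => lam q.1 q.2) :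
    IntegrableOn (backProjIntegrand p lam z θ) (Set.Icc (-τ) τ) :=
  .of_bound measure_Icc_lt_top
    ((stronglyMeasurable_backProjIntegrand hmeas).comp_measurable
      measurable_prodMk_left).aestronglyMeasurable _
    (ae_restrict_of_forall_mem measurableSet_Icc fun _ hr => norm_backProjIntegrand_le hr)

end BackProjIntegrand

section TruncBackProj

variable {p : ℕ} {lam lam₁ lam₂ : 𝕊 p → ℝ → ℝ} {z : EuclideanSpace ℝ (Fin p)} {τ C₀ : ℝ}

theorem ae_norm_setIntegral_backProjIntegrand_le (hp : 1 ≤ p) (hτ : 0 ≤ τ)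
    (hL : MemLp (fun q : 𝕊 p × ℝ => lam q.1 q.2) 2 ((sphereMeasure p).prod volume))
    (hsupp : ∀ θ (u : ℝ), C₀ < |u| → lam θ u = 0) :
    ∀ᵐ θ ∂sphereMeasure p, ‖∫ r in Set.Icc (-τ) τ, backProjIntegrand p lam z θ r‖ ≤
      2 * τ ^ p * (√(2 * C₀) * √(∫ u, lam θ u ^ 2)) := by
  filter_upwards [ae_memLp_two_prodMk hL] with θ hθ
  exact (norm_setIntegral_backProjIntegrand_le hp hτ).trans (by
    gcongr; exact integral_abs_le_sqrt_mul_sqrt_integral_sq_of_eq_zero_of_lt_abs hθ (hsupp θ))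

theorem integrable_setIntegral_backProjIntegrand (hp : 1 ≤ p) (hτ : 0 ≤ τ)
    (hmeas : Measurable fun q : 𝕊 p × ℝ => lam q.1 q.2)
    (hL : MemLp (fun q : 𝕊 p × ℝ => lam q.1 q.2) 2 ((sphereMeasure p).prod volume))
    (hsupp : ∀ θ (u : ℝ), C₀ < |u| → lam θ u = 0) :
    Integrable (fun θ => ∫ r in Set.Icc (-τ) τ, backProjIntegrand p lam z θ r)
      (sphereMeasure p) :=
  .mono' (((memLp_two_sqrt_integral_sq hL).integrable one_le_two).const_mul _ |>.const_mul _)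
    ((stronglyMeasurable_backProjIntegrand hmeas).integral_prod_right'.aestronglyMeasurable)
    (ae_norm_setIntegral_backProjIntegrand_le hp hτ hL hsupp)

theorem truncBackProj_sub (hp : 1 ≤ p) (hτ : 0 ≤ τ)
    (hmeas₁ : Measurable fun q : 𝕊 p × ℝ => lam₁ q.1 q.2)
    (hmeas₂ : Measurable fun q : 𝕊 p × ℝ => lam₂ q.1 q.2)
    (hL₁ : MemLp (fun q : 𝕊 p × ℝ => lam₁ q.1 q.2) 2 ((sphereMeasure p).prod volume))
    (hL₂ : MemLp (fun q : 𝕊 p × ℝ => lam₂ q.1 q.2) 2 ((sphereMeasure p).prod volume))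
    (hsupp₁ : ∀ θ (u : ℝ), C₀ < |u| → lam₁ θ u = 0)
    (hsupp₂ : ∀ θ (u : ℝ), C₀ < |u| → lam₂ θ u = 0) :
    truncBackProj p (lam₁ - lam₂) τ z = truncBackProj p lam₁ τ z - truncBackProj p lam₂ τ z := by
  simp only [truncBackProj_eq, ← mul_sub]
  rw [← integral_sub (integrable_setIntegral_backProjIntegrand hp hτ hmeas₁ hL₁ hsupp₁)
    (integrable_setIntegral_backProjIntegrand hp hτ hmeas₂ hL₂ hsupp₂)]
  congr 1
  refine integral_congr_ae ?_
  filter_upwards [ae_memLp_two_prodMk hL₁, ae_memLp_two_prodMk hL₂] with θ h₁ h₂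
  have hint₁ := integrable_of_memLp_two_of_eq_zero_of_lt_abs h₁ (hsupp₁ θ)
  have hint₂ := integrable_of_memLp_two_of_eq_zero_of_lt_abs h₂ (hsupp₂ θ)
  simp only [backProjIntegrand_sub hint₁ hint₂]
  exact integral_sub (integrableOn_backProjIntegrand hmeas₁) (integrableOn_backProjIntegrand hmeas₂)

theorem integral_sqrt_integral_sq_le
    (hL : MemLp (fun q : 𝕊 p × ℝ => lam q.1 q.2) 2 ((sphereMeasure p).prod volume)) :
    ∫ θ, √(∫ u, lam θ u ^ 2) ∂sphereMeasure p ≤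
      √((sphereMeasure p).real Set.univ) * √(∫ θ, (∫ u, lam θ u ^ 2) ∂sphereMeasure p) := by
  refine (integral_le_sqrt_measureReal_univ_mul_sqrt_integral_sq (memLp_two_sqrt_integral_sq hL)
    (Filter.Eventually.of_forall fun θ => Real.sqrt_nonneg _)).trans_eq ?_
  simp only [Real.sq_sqrt (integral_nonneg fun _ => sq_nonneg _)]

theorem norm_truncBackProj_le (hp : 1 ≤ p) (hτ : 0 ≤ τ)
    (hL : MemLp (fun q : 𝕊 p × ℝ => lam q.1 q.2) 2 ((sphereMeasure p).prod volume))
    (hsupp : ∀ θ (u : ℝ), C₀ < |u| → lam θ u = 0) :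
    ‖truncBackProj p lam τ z‖ ≤
      √(2 * C₀ * (sphereMeasure p Set.univ).toReal) / (2 * Real.pi) ^ p * τ ^ p *
        √(∫ θ, (∫ u, lam θ u ^ 2) ∂sphereMeasure p) := by
  have hc : ‖(1 / (2 * (2 * Real.pi) ^ p) : ℂ)‖ = 1 / (2 * (2 * Real.pi) ^ p) := by
    simp [abs_of_pos Real.pi_pos]
  calc ‖truncBackProj p lam τ z‖
      ≤ 1 / (2 * (2 * Real.pi) ^ p) *
          ∫ θ, 2 * τ ^ p * (√(2 * C₀) * √(∫ u, lam θ u ^ 2)) ∂sphereMeasure p := by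
        rw [truncBackProj_eq, norm_mul, hc]
        gcongr
        exact (norm_integral_le_integral_norm _).trans (integral_mono_of_nonneg
          (Filter.Eventually.of_forall fun _ => norm_nonneg _)
          (((memLp_two_sqrt_integral_sq hL).integrable one_le_two).const_mul _ |>.const_mul _)
          (ae_norm_setIntegral_backProjIntegrand_le hp hτ hL hsupp))
    _ = τ ^ p * √(2 * C₀) / (2 * Real.pi) ^ p *
          ∫ θ, √(∫ u, lam θ u ^ 2) ∂sphereMeasure p := by
        rw [integral_const_mul, integral_const_mul]
        field_simp
    _ ≤ τ ^ p * √(2 * C₀) / (2 * Real.pi) ^ p *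
          (√((sphereMeasure p).real Set.univ) *
            √(∫ θ, (∫ u, lam θ u ^ 2) ∂sphereMeasure p)) := by
        gcongr
        exact integral_sqrt_integral_sq_le hL
    _ = _ := by
        rw [Real.sqrt_mul' _ ENNReal.toReal_nonneg, measureReal_def]
        ring

end TruncBackProj

theorem truncated_backprojection_lipschitz (p : ℕ) (hp : 1 ≤ p) (C₀ : ℝ)
    (lam₁ lam₂ : Metric.sphere (0 : EuclideanSpace ℝ (Fin p)) 1 → ℝ → ℝ)
    (hmeas₁ : Measurable (fun q : Metric.sphere (0 : EuclideanSpace ℝ (Fin p)) 1 × ℝ =>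
      lam₁ q.1 q.2))
    (hmeas₂ : Measurable (fun q : Metric.sphere (0 : EuclideanSpace ℝ (Fin p)) 1 × ℝ =>
      lam₂ q.1 q.2))
    (hL₁ : MemLp (fun q : Metric.sphere (0 : EuclideanSpace ℝ (Fin p)) 1 × ℝ =>
      lam₁ q.1 q.2) 2 ((sphereMeasure p).prod volume))
    (hL₂ : MemLp (fun q : Metric.sphere (0 : EuclideanSpace ℝ (Fin p)) 1 × ℝ =>
      lam₂ q.1 q.2) 2 ((sphereMeasure p).prod volume))
    (hsupp₁ : ∀ θ (u : ℝ), C₀ < |u| → lam₁ θ u = 0)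
    (hsupp₂ : ∀ θ (u : ℝ), C₀ < |u| → lam₂ θ u = 0)
    (τ : ℝ) (hτ : 0 < τ) (z : EuclideanSpace ℝ (Fin p)) :
    ‖truncBackProj p lam₁ τ z - truncBackProj p lam₂ τ z‖ ≤
      Real.sqrt (2 * C₀ * (sphereMeasure p Set.univ).toReal) / (2 * Real.pi) ^ p *
        τ ^ p *
        Real.sqrt (∫ θ, (∫ u : ℝ, (lam₁ θ u - lam₂ θ u) ^ 2) ∂(sphereMeasure p)) := by
  rw [← truncBackProj_sub hp hτ.le hmeas₁ hmeas₂ hL₁ hL₂ hsupp₁ hsupp₂]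
  exact norm_truncBackProj_le hp hτ.le (hL₁.sub hL₂) fun θ u hu => by
    simp [hsupp₁ θ u hu, hsupp₂ θ u hu]
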